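/- arXiv:2412.10394 — 2 statements merged into one kernel-verified Lean document; each statement's English description precedes it below -/
import Mathlib

section
/- Let n be a positive integer and let α be a parking function of length n that is not a rearrangement of α^{(k)} for any k ∈ {1, …, n}. Then there exists an index i with α_i > 1 such that the sequence obtained from α by replacing α_i with α_i + 1 is again a parking function of length n. -/
/-- A sequence `α : Fin n → ℕ` (with entries in `{1, …, n}`) is a parking function of
length `n` if for every `i ∈ {1, …, n}`, the number of indices `j` with `α j ≤ i`
is at least `i`. -/
def IsParkingFunction (n : ℕ) (α : Fin n → ℕ) : Prop :=
  (∀ j, α j ∈ Finset.Icc 1 n) ∧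
    ∀ i ∈ Finset.Icc 1 n, i ≤ (Finset.univ.filter fun j => α j ≤ i).card

/-- The sequence `α⁽ᵏ⁾ = (1, …, 1, k+1, k+2, …, n)` with `k` ones (indexed by `Fin n`,
so position `i` holds `1` if `i < k` and `i + 1` otherwise). -/
def alphaK (n k : ℕ) : Fin n → ℕ := fun i => if (i : ℕ) < k then 1 else (i : ℕ) + 1

/-!
Suppose no entry `α i > 1` can be raised. Raising `α i` only lowers the count `#{j | α j ≤ α i}`,
by one, so every value `v > 1` taken by `α` must be tight: exactly `v` entries are `≤ v`
(for `v = n` this holds trivially). With `k = #{j | α j ≤ 1}`, the counting function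
`t ↦ #{j | α j ≤ t}` is therefore `t ↦ max k t` on `[1, n]`: it stays constant between attained
values and meets the diagonal at each of them. This is the counting function of `α⁽ᵏ⁾`, and two
sequences with the same counting function are rearrangements of each other.
-/

open Finset Function

section CountLE

variable {ι : Type*} [Fintype ι]

def countLE (f : ι → ℕ) (t : ℕ) : ℕ := #{j | f j ≤ t}

theorem countLE_mono (f : ι → ℕ) : Monotone (countLE f) := fun _ _ hst =>
  card_le_card (monotone_filter_right _ fun _ _ h => h.trans hst)

theorem countLE_le_card (f : ι → ℕ) (t : ℕ) : countLE f t ≤ Fintype.card ι :=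
  card_filter_le _ _

theorem countLE_of_forall_le {f : ι → ℕ} {t : ℕ} (h : ∀ j, f j ≤ t) :
    countLE f t = Fintype.card ι := by
  rw [countLE, filter_true_of_mem fun j _ => h j, card_univ]

theorem countLE_zero_of_forall_pos {f : ι → ℕ} (h : ∀ j, 0 < f j) : countLE f 0 = 0 := by
  rw [countLE, filter_false_of_mem fun j _ => (h j).not_ge, card_empty]

theorem countLE_zero (f : ι → ℕ) : countLE f 0 = #{j | f j = 0} := by
  simp only [countLE, Nat.le_zero]

theorem countLE_succ (f : ι → ℕ) (t : ℕ) :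
    countLE f (t + 1) = countLE f t + #{j | f j = t + 1} := by
  classical
  rw [countLE, countLE, ← card_union_of_disjoint (disjoint_filter.2 fun _ _ h => by omega)]
  congr 1
  ext j
  simp only [mem_filter, mem_union, mem_univ, true_and]
  omega

theorem countLE_eq_of_forall_mem_Icc {f g : ι → ℕ} {n : ℕ} (hf : ∀ j, f j ∈ Icc 1 n)
    (hg : ∀ j, g j ∈ Icc 1 n) (h : ∀ t ∈ Icc 1 n, countLE f t = countLE g t) (t : ℕ) :
    countLE f t = countLE g t := by
  rcases Nat.eq_zero_or_pos t with rfl | ht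
  · rw [countLE_zero_of_forall_pos fun j => (mem_Icc.1 (hf j)).1,
      countLE_zero_of_forall_pos fun j => (mem_Icc.1 (hg j)).1]
  · rcases le_or_gt t n with htn | hnt
    · exact h t (mem_Icc.2 ⟨ht, htn⟩)
    · rw [countLE_of_forall_le fun j => (mem_Icc.1 (hf j)).2.trans hnt.le,
        countLE_of_forall_le fun j => (mem_Icc.1 (hg j)).2.trans hnt.le]

section Update

variable [DecidableEq ι] (f : ι → ℕ) (i : ι)

theorem countLE_update_succ_of_ne {t : ℕ} (ht : t ≠ f i) :
    countLE (update f i (f i + 1)) t = countLE f t := by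
  refine congrArg card (filter_congr fun j _ => ?_)
  rcases eq_or_ne j i with rfl | hji
  · rw [update_self]
    omega
  · rw [update_of_ne hji]

theorem countLE_update_succ_self :
    countLE (update f i (f i + 1)) (f i) + 1 = countLE f (f i) := by
  have hfilter : univ.filter (fun j => f j ≤ f i) =
      insert i (univ.filter fun j => update f i (f i + 1) j ≤ f i) := by
    ext j
    rcases eq_or_ne j i with rfl | hji
    · simp
    · simp [hji]
  rw [countLE, countLE, hfilter, card_insert_of_notMem (by simp)]

end Update

theorem exists_perm_of_card_fiber_eq {β : Type*} [DecidableEq β] {f g : ι → β}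
    (h : ∀ b, #{j | f j = b} = #{j | g j = b}) : ∃ σ : Equiv.Perm ι, f = fun j => g (σ j) := by
  have hfiber : ∀ b, { j // f j = b } ≃ { j // g j = b } := fun b =>
    Fintype.equivOfCardEq (by rw [Fintype.card_subtype, Fintype.card_subtype, h b])
  exact ⟨Equiv.ofFiberEquiv hfiber, funext fun j => (Equiv.ofFiberEquiv_map hfiber j).symm⟩

theorem exists_perm_of_countLE_eq {f g : ι → ℕ} (h : ∀ t, countLE f t = countLE g t) :
    ∃ σ : Equiv.Perm ι, f = fun j => g (σ j) := by
  refine exists_perm_of_card_fiber_eq fun b => ?_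
  cases b with
  | zero => rw [← countLE_zero, ← countLE_zero, h]
  | succ t =>
    have hf := countLE_succ f t
    rw [h, h, countLE_succ g t] at hf
    omega

end CountLE

section ParkingFunction

variable {n : ℕ} {α : Fin n → ℕ}

theorem IsParkingFunction.le_countLE (hα : IsParkingFunction n α) {t : ℕ} (ht : t ∈ Icc 1 n) :
    t ≤ countLE α t :=
  hα.2 t ht

theorem IsParkingFunction.update_succ (hα : IsParkingFunction n α) {i : Fin n} (hi : α i < n)
    (hslack : α i < countLE α (α i)) : IsParkingFunction n (update α i (α i + 1)) := by
  refine ⟨fun j => ?_, fun t ht => (?_ : t ≤ countLE _ t)⟩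
  · rcases eq_or_ne j i with rfl | hji
    · rw [update_self]
      exact mem_Icc.2 ⟨by omega, hi⟩
    · rw [update_of_ne hji]
      exact hα.1 j
  · rcases eq_or_ne t (α i) with rfl | ht'
    · have := countLE_update_succ_self α i
      omega
    · rw [countLE_update_succ_of_ne α i ht']
      exact hα.le_countLE ht

theorem IsParkingFunction.countLE_eq_max (hα : IsParkingFunction n α)
    (htight : ∀ i, 1 < α i → countLE α (α i) = α i) :
    ∀ t ∈ Icc 1 n, countLE α t = max (countLE α 1) t := by
  intro t ht
  obtain ⟨ht1, htn⟩ := mem_Icc.1 ht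
  induction t, ht1 using Nat.le_induction with
  | base => have := hα.le_countLE ht; omega
  | succ t ht1 ih =>
    have hprev := ih (mem_Icc.2 ⟨ht1, by omega⟩) (by omega)
    have hmono := countLE_mono α (t.le_add_right 1)
    have hpark := hα.le_countLE ht
    by_cases hattained : ∃ i, α i = t + 1
    · obtain ⟨i, hi⟩ := hattained
      have hcount := htight i (by omega)
      rw [hi] at hcount
      omega
    · have hempty : #{j | α j = t + 1} = 0 := card_eq_zero.2 (filter_eq_empty_iff.2
        fun j _ hj => hattained ⟨j, hj⟩)
      have hsucc := countLE_succ α t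
      omega

theorem alphaK_mem_Icc (k : ℕ) (j : Fin n) : alphaK n k j ∈ Icc 1 n := by
  have := j.isLt
  unfold alphaK
  split <;> exact mem_Icc.2 ⟨by omega, by omega⟩

theorem countLE_alphaK {k t : ℕ} (hk : k ≤ n) (ht : t ∈ Icc 1 n) :
    countLE (alphaK n k) t = max k t := by
  obtain ⟨ht1, htn⟩ := mem_Icc.1 ht
  have hfilter : univ.filter (fun j => alphaK n k j ≤ t) =
      univ.filter fun j : Fin n => (j : ℕ) < max k t := by
    refine filter_congr fun j _ => ?_
    unfold alphaK
    split <;> omega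
  rw [countLE, hfilter, ← Fintype.card_subtype, Fintype.card_fin_lt_of_le (max_le hk htn)]

end ParkingFunction

/-- If `α` is a parking function of length `n` that is not a rearrangement
of `α⁽ᵏ⁾` for any `k ∈ {1, …, n}`, then there is an index `i` with `α i > 1` such that
replacing `α i` by `α i + 1` again yields a parking function of length `n`. -/
theorem non_vertex_parkingFunction_increment (n : ℕ) (hn : 0 < n) (α : Fin n → ℕ)
    (hα : IsParkingFunction n α)
    (hnv : ¬ ∃ k ∈ Finset.Icc 1 n, ∃ σ : Equiv.Perm (Fin n),
      α = fun i => alphaK n k (σ i)) :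
    ∃ i : Fin n, 1 < α i ∧
      IsParkingFunction n (Function.update α i (α i + 1)) := by
  by_contra! hstuck
  have htight : ∀ i, 1 < α i → countLE α (α i) = α i := by
    intro i hi
    have hαi := mem_Icc.1 (hα.1 i)
    rcases hαi.2.lt_or_eq with hlt | heq
    · exact le_antisymm (not_lt.1 fun hslack => hstuck i hi (hα.update_succ hlt hslack))
        (hα.le_countLE (mem_Icc.2 ⟨hi.le, hαi.2⟩))
    · rw [heq, countLE_of_forall_le fun j => (mem_Icc.1 (hα.1 j)).2, Fintype.card_fin]
  have hk : countLE α 1 ∈ Icc 1 n :=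
    mem_Icc.2 ⟨hα.le_countLE (mem_Icc.2 ⟨le_rfl, hn⟩),
      (countLE_le_card α 1).trans_eq (Fintype.card_fin n)⟩
  refine hnv ⟨countLE α 1, hk, exists_perm_of_countLE_eq
    (countLE_eq_of_forall_mem_Icc hα.1 (alphaK_mem_Icc _) fun t ht => ?_)⟩
  rw [hα.countLE_eq_max htight t ht, countLE_alphaK (mem_Icc.1 hk).2 ht]
end

section
/- For every positive integer n, a point v = (v_1, …, v_n) ∈ ℝ^n is an extreme point of the parking function polytope 𝒫F_n if and only if v is a rearrangement of the sequence α^{(k)} = (1, …, 1, k+1, k+2, …, n) (with k ones) for some k ∈ {1, …, n}. -/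
/-- The set of parking functions of length `n`, regarded as points of `ℝⁿ`. -/
def parkingFunctionPoints (n : ℕ) : Set (Fin n → ℝ) :=
  {x | ∃ α : Fin n → ℕ, IsParkingFunction n α ∧ x = fun i => (α i : ℝ)}

/-- The parking function polytope `𝒫F_n ⊆ ℝⁿ`, the convex hull of the set of all
parking functions of length `n`. -/
def parkingFunctionPolytope (n : ℕ) : Set (Fin n → ℝ) :=
  convexHull ℝ (parkingFunctionPoints n)

/-! An extreme point of the hull of the finite set of parking functions is a parking function
`β`. If `2 ≤ β j < #{l | β l ≤ β j}`, then `β ± eⱼ` are parking functions with midpoint `β`; so at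
a vertex every entry `β j ≥ 2` has exactly `β j` entries `≤ β j`. Since permuting coordinates
preserves the polytope we may sort `β`, and a sorted parking function with this property is some
`α⁽ᵏ⁾`. Conversely, `α⁽ᵏ⁾` is the only point of `𝒫F_n` at which the valid inequalities
`1 ≤ xᵢ` (`i < k`) and `∑_{i ≥ j} xᵢ ≤ ∑_{i ≥ j} (i + 1)` (`j ≥ k`) are all tight; the latter
hold because the parking condition at `t` leaves at most `n - t` entries above `t`. -/

open Finset Function

theorem Finset.sum_eq_sum_range_card_filter_lt {ι : Type*} (s : Finset ι) (f : ι → ℕ) {m : ℕ}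
    (hf : ∀ i ∈ s, f i ≤ m) : ∑ i ∈ s, f i = ∑ t ∈ range m, #{i ∈ s | t < f i} := by
  calc ∑ i ∈ s, f i = ∑ i ∈ s, #{t ∈ range m | t < f i} := by
        refine sum_congr rfl fun i hi => ?_
        rw [show {t ∈ range m | t < f i} = range (f i) by ext; simp only [mem_filter, mem_range]; grind [hf i hi], card_range]
    _ = ∑ t ∈ range m, #{i ∈ s | t < f i} := by
        simp only [card_eq_sum_ones, sum_filter]
        exact sum_comm

theorem LinearMap.eq_of_mem_openSegment_of_le {𝕜 E : Type*} [Field 𝕜] [LinearOrder 𝕜]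
    [IsStrictOrderedRing 𝕜] [AddCommGroup E] [Module 𝕜 E] (l : E →ₗ[𝕜] 𝕜) {x y v : E}
    (hv : v ∈ openSegment 𝕜 x y) (hx : l x ≤ l v) (hy : l y ≤ l v) : l x = l v := by
  obtain ⟨a, b, ha, hb, hab, rfl⟩ := hv
  simp only [map_add, map_smul, smul_eq_mul] at hx hy ⊢
  obtain rfl : b = 1 - a := by linarith
  have hxy : l x ≤ l y := le_of_mul_le_mul_left (by linarith) hb
  nlinarith

namespace IsParkingFunction

variable {n : ℕ} {β : Fin n → ℕ}

theorem comp_perm (h : IsParkingFunction n β) (σ : Equiv.Perm (Fin n)) :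
    IsParkingFunction n (β ∘ σ) := by
  refine ⟨fun j => h.1 (σ j), fun i hi => ?_⟩
  have hcard : #{j | (β ∘ σ) j ≤ i} = #{j | β j ≤ i} := by
    rw [← card_map σ.toEmbedding, map_filter]
    simp
  exact hcard ▸ h.2 i hi

theorem update_pred (h : IsParkingFunction n β) {j : Fin n} (hj : 2 ≤ β j) :
    IsParkingFunction n (update β j (β j - 1)) := by
  refine ⟨fun l => ?_, fun i hi => (h.2 i hi).trans (card_le_card fun l => ?_)⟩
  · have := h.1 l
    rcases eq_or_ne l j with rfl | hne <;> simp_all; omega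
  · rcases eq_or_ne l j with rfl | hne <;> simp_all; omega

theorem update_succ_s13 (h : IsParkingFunction n β) {j : Fin n} (hj : β j < #{l | β l ≤ β j}) :
    IsParkingFunction n (update β j (β j + 1)) := by
  have hjn : β j < n := hj.trans_le (card_le_univ _ |>.trans_eq (Fintype.card_fin n))
  refine ⟨fun l => ?_, fun i hi => ?_⟩
  · have := h.1 l
    rcases eq_or_ne l j with rfl | hne <;> simp_all
  by_cases hij : i = β j
  · subst hij
    -- only `j` itself leaves the set of entries `≤ β j`
    calc β j ≤ #{l | β l ≤ β j} - 1 := by omega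
      _ ≤ #((univ.filter fun l => β l ≤ β j).erase j) := by rw [card_erase_of_mem (by simp)]
      _ ≤ _ := card_le_card fun l => by
          rcases eq_or_ne l j with rfl | hne <;> simp_all
  · convert h.2 i hi using 2
    ext l
    rcases eq_or_ne l j with rfl | hne <;> simp_all; omega

theorem le_succ_of_monotone (h : IsParkingFunction n β) (hmono : Monotone β) (i : Fin n) :
    β i ≤ i + 1 := by
  by_contra! hi
  have hpark := h.2 (β i - 1) (mem_Icc.2 ⟨by omega, by have := (mem_Icc.1 (h.1 i)).2; omega⟩)
  have hsub : univ.filter (fun l => β l ≤ β i - 1) ⊆ Iio i := fun l hl => by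
    simp only [mem_filter, mem_univ, true_and, mem_Iio] at hl ⊢
    by_contra! hil
    have := hmono hil
    omega
  have := (card_le_card hsub).trans_eq (Fin.card_Iio i)
  omega

theorem sum_tail_le (h : IsParkingFunction n β) (j : ℕ) :
    ∑ i : Fin n with j ≤ i.val, β i ≤ ∑ i : Fin n with j ≤ i.val, (i.val + 1) := by
  rw [sum_eq_sum_range_card_filter_lt _ β fun i _ => (mem_Icc.1 (h.1 i)).2,
    sum_eq_sum_range_card_filter_lt _ (fun i : Fin n => i.val + 1) fun i _ => i.isLt]
  refine sum_le_sum fun t ht => ?_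
  simp only [filter_filter]
  rcases le_or_gt t j with htj | hjt
  · exact card_le_card (monotone_filter_right _ fun i _ hi => ⟨hi.1, by omega⟩)
  -- at most `n - t` entries exceed `t`, by the parking condition at `t`
  have hpark := h.2 t (mem_Icc.2 ⟨by omega, (mem_range.1 ht).le⟩)
  have hβ := card_filter_add_card_filter_not (s := univ) (fun i => β i ≤ t)
  have hval := card_filter_add_card_filter_not (s := univ) (fun i : Fin n => (i : ℕ) < t)
  simp only [not_le, not_lt, card_univ, Fintype.card_fin, Fin.card_filter_val_lt] at hβ hval
  calc #{i | j ≤ i.val ∧ t < β i} ≤ #{i | t < β i} :=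
        card_le_card (monotone_filter_right _ fun i _ hi => hi.2)
    _ ≤ #{i : Fin n | t ≤ i.val} := by grind
    _ ≤ _ := card_le_card (monotone_filter_right _ fun i _ hi => ⟨by omega, by omega⟩)

theorem of_le_succ (h₁ : ∀ i, 1 ≤ β i) (h₂ : ∀ i : Fin n, β i ≤ i + 1) :
    IsParkingFunction n β := by
  refine ⟨fun i => mem_Icc.2 ⟨h₁ i, (h₂ i).trans i.isLt⟩, fun t ht => ?_⟩
  calc t = #{i : Fin n | i < t} := by rw [Fin.card_filter_val_lt]; grind
    _ ≤ #{i | β i ≤ t} := card_le_card (monotone_filter_right _ fun i _ hi => (h₂ i).trans hi)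

end IsParkingFunction

theorem isParkingFunction_alphaK {n k : ℕ} : IsParkingFunction n (alphaK n k) :=
  IsParkingFunction.of_le_succ (fun i => by unfold alphaK; split_ifs <;> omega)
    fun i => by unfold alphaK; split_ifs <;> omega

theorem exists_eq_alphaK_of_monotone {n : ℕ} (hn : 0 < n) {γ : Fin n → ℕ} (hmono : Monotone γ)
    (hγ : ∀ i : Fin n, γ i = 1 ∨ γ i = i + 1) : ∃ k ∈ Icc 1 n, γ = alphaK n k := by
  have hone : ∀ i, 1 ≤ γ i := fun i => by rcases hγ i with h | h <;> omega
  set k := #{i | γ i = 1}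
  have hone_iff : ∀ i : Fin n, γ i = 1 ↔ (i : ℕ) < k := fun i => by
    constructor
    · intro hi
      have hsub : Iic i ⊆ univ.filter (γ · = 1) := fun l hl => by
        have := hmono (mem_Iic.1 hl); have := hone l; simp; omega
      have := (Fin.card_Iic i).symm.trans_le (card_le_card hsub)
      omega
    · intro hik
      by_contra hi
      have hsub : univ.filter (γ · = 1) ⊆ Iio i := fun l hl => by
        simp only [mem_filter, mem_univ, true_and, mem_Iio] at hl ⊢
        by_contra! hil
        have := hmono hil; have := hγ i; omega
      have := (card_le_card hsub).trans_eq (Fin.card_Iio i)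
      omega
  have hk1 : 1 ≤ k := (hone_iff ⟨0, hn⟩).1 (by simpa using hγ ⟨0, hn⟩)
  have hkn : k ≤ n := card_le_univ _ |>.trans_eq (Fintype.card_fin n)
  refine ⟨k, mem_Icc.2 ⟨hk1, hkn⟩, funext fun i => ?_⟩
  unfold alphaK
  split_ifs with hik
  · exact (hone_iff i).2 hik
  · exact (hγ i).resolve_left (mt (hone_iff i).1 hik)

theorem Fin.sum_filter_le_val_eq_add {M : Type*} [AddCommMonoid M] {n : ℕ} (f : Fin n → M)
    (i : Fin n) :
    ∑ l : Fin n with i.val ≤ l.val, f l = f i + ∑ l : Fin n with i.val + 1 ≤ l.val, f l := by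
  rw [← sum_insert (by simp)]
  congr 1
  ext l
  simp only [mem_filter, mem_univ, true_and, mem_insert, ← Fin.val_inj]
  omega

def tailSum (n j : ℕ) : (Fin n → ℝ) →ₗ[ℝ] ℝ := ∑ i : Fin n with j ≤ i.val, LinearMap.proj i

@[simp]
theorem tailSum_apply (n j : ℕ) (x : Fin n → ℝ) :
    tailSum n j x = ∑ i : Fin n with j ≤ i.val, x i := by
  simp [tailSum]

section Polytope

variable {n : ℕ}

theorem natCast_mem_parkingFunctionPolytope {β : Fin n → ℕ} (h : IsParkingFunction n β) :
    (fun i => (β i : ℝ)) ∈ parkingFunctionPolytope n :=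
  subset_convexHull ℝ _ ⟨β, h, rfl⟩

theorem comp_perm_mem_extremePoints {v : Fin n → ℝ}
    (hv : v ∈ (parkingFunctionPolytope n).extremePoints ℝ) (σ : Equiv.Perm (Fin n)) :
    v ∘ σ ∈ (parkingFunctionPolytope n).extremePoints ℝ := by
  let P (τ : Equiv.Perm (Fin n)) := LinearEquiv.funCongrLeft ℝ ℝ τ
  have hsub : ∀ τ, P τ '' parkingFunctionPoints n ⊆ parkingFunctionPoints n := by
    rintro τ _ ⟨_, ⟨β, hβ, rfl⟩, rfl⟩
    exact ⟨β ∘ τ, hβ.comp_perm τ, rfl⟩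
  have hpts : P σ '' parkingFunctionPoints n = parkingFunctionPoints n :=
    (hsub σ).antisymm fun x hx => ⟨P σ.symm x, hsub σ.symm ⟨x, hx, rfl⟩, by ext; simp [P]⟩
  have hpoly : P σ '' parkingFunctionPolytope n = parkingFunctionPolytope n := by
    simpa only [parkingFunctionPolytope, LinearEquiv.coe_coe, hpts] using
      (P σ).toLinearMap.image_convexHull (parkingFunctionPoints n)
  rw [← hpoly, ← image_extremePoints]
  exact ⟨v, hv, rfl⟩

theorem one_le_of_mem_parkingFunctionPolytope {x : Fin n → ℝ}
    (hx : x ∈ parkingFunctionPolytope n) (i : Fin n) : 1 ≤ x i := by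
  refine convexHull_min ?_ (convex_halfSpace_ge (LinearMap.proj (R := ℝ) i).isLinear 1) hx
  rintro _ ⟨β, hβ, rfl⟩
  simp only [Set.mem_ofPred_eq, LinearMap.proj_apply]
  exact_mod_cast (mem_Icc.1 (hβ.1 i)).1

theorem tailSum_le_of_mem_parkingFunctionPolytope {x : Fin n → ℝ}
    (hx : x ∈ parkingFunctionPolytope n) (j : ℕ) :
    tailSum n j x ≤ tailSum n j fun i => i.val + 1 := by
  refine convexHull_min (t := {y | tailSum n j y ≤ _}) ?_
    (convex_halfSpace_le (tailSum n j).isLinear _) hx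
  rintro _ ⟨β, hβ, rfl⟩
  simp only [Set.mem_ofPred_eq, tailSum_apply]
  exact_mod_cast hβ.sum_tail_le j

theorem alphaK_mem_extremePoints (k : ℕ) :
    (fun i => (alphaK n k i : ℝ)) ∈ (parkingFunctionPolytope n).extremePoints ℝ := by
  set v : Fin n → ℝ := fun i => (alphaK n k i : ℝ)
  refine ⟨natCast_mem_parkingFunctionPolytope isParkingFunction_alphaK, fun x hx y hy hv => ?_⟩
  -- every inequality that is tight at `v` stays tight at `x`
  have hone : ∀ i : Fin n, i.val < k → x i = 1 := fun i hi => by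
    have := (-LinearMap.proj (R := ℝ) i).eq_of_mem_openSegment_of_le hv
      (by simpa [v, alphaK, hi] using one_le_of_mem_parkingFunctionPolytope hx i)
      (by simpa [v, alphaK, hi] using one_le_of_mem_parkingFunctionPolytope hy i)
    simpa [v, alphaK, hi] using this
  have htail : ∀ j, k ≤ j → tailSum n j x = tailSum n j fun i => i.val + 1 := by
    intro j hj
    have hvj : tailSum n j v = tailSum n j fun i => i.val + 1 := by
      simp only [tailSum_apply]
      refine sum_congr rfl fun i hi => ?_
      simp only [mem_filter, mem_univ, true_and] at hi
      simp [v, alphaK, show ¬ i.val < k by omega]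
    rw [← hvj]
    exact (tailSum n j).eq_of_mem_openSegment_of_le hv
      (hvj ▸ tailSum_le_of_mem_parkingFunctionPolytope hx j)
      (hvj ▸ tailSum_le_of_mem_parkingFunctionPolytope hy j)
  funext i
  by_cases hi : i.val < k
  · simp [v, alphaK, hi, hone i hi]
  · have h₀ := htail i (by omega)
    have h₁ := htail (i + 1) (by omega)
    simp only [tailSum_apply] at h₀ h₁
    rw [Fin.sum_filter_le_val_eq_add, Fin.sum_filter_le_val_eq_add, h₁] at h₀
    simp only [v, alphaK, hi, if_false]
    push_cast
    linarith

theorem card_filter_le_of_mem_extremePoints {β : Fin n → ℕ} (h : IsParkingFunction n β)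
    (hv : (fun i => (β i : ℝ)) ∈ (parkingFunctionPolytope n).extremePoints ℝ) {j : Fin n}
    (hj : 2 ≤ β j) : #{l | β l ≤ β j} ≤ β j := by
  by_contra! hlt
  set v : Fin n → ℝ := fun i => (β i : ℝ)
  set e : Fin n → ℝ := Pi.single j 1
  have hminus : (fun i => ((update β j (β j - 1) i : ℕ) : ℝ)) = v - e := by
    ext i
    rcases eq_or_ne i j with rfl | hne
    · simp [v, e, Nat.cast_sub (by omega : 1 ≤ β i)]
    · simp [v, e, hne]
  have hplus : (fun i => ((update β j (β j + 1) i : ℕ) : ℝ)) = v + e := by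
    ext i
    rcases eq_or_ne i j with rfl | hne
    · simp [v, e]
    · simp [v, e, hne]
  have hseg : v ∈ openSegment ℝ (v - e) (v + e) :=
    ⟨1 / 2, 1 / 2, by norm_num, by norm_num, by norm_num, by module⟩
  have heq := hv.2 (hminus ▸ natCast_mem_parkingFunctionPolytope (h.update_pred hj))
    (hplus ▸ natCast_mem_parkingFunctionPolytope (h.update_succ_s13 hlt)) hseg
  simpa [e] using congrFun heq j

theorem eq_one_or_eq_succ_of_mem_extremePoints {β : Fin n → ℕ} (h : IsParkingFunction n β)
    (hmono : Monotone β) (hv : (fun i => (β i : ℝ)) ∈ (parkingFunctionPolytope n).extremePoints ℝ)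
    (i : Fin n) : β i = 1 ∨ β i = i.val + 1 := by
  refine or_iff_not_imp_left.2 fun hi => ?_
  have h2 : 2 ≤ β i := by have := (mem_Icc.1 (h.1 i)).1; omega
  have hcard := card_filter_le_of_mem_extremePoints h hv h2
  have hIic : Iic i ⊆ univ.filter (β · ≤ β i) := fun l hl => by simpa using hmono (mem_Iic.1 hl)
  have := (Fin.card_Iic i).symm.trans_le ((card_le_card hIic).trans hcard)
  have := h.le_succ_of_monotone hmono i
  omega

end Polytope

/-- A point `v ∈ ℝⁿ` is an extreme point (vertex) of the parking function
polytope `𝒫F_n` if and only if `v` is a rearrangement of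
`α⁽ᵏ⁾ = (1, …, 1, k+1, …, n)` for some `k ∈ {1, …, n}`. -/
theorem extremePoints_parkingFunctionPolytope (n : ℕ) (hn : 0 < n) (v : Fin n → ℝ) :
    v ∈ (parkingFunctionPolytope n).extremePoints ℝ ↔
      ∃ k ∈ Finset.Icc 1 n, ∃ σ : Equiv.Perm (Fin n),
        v = fun i => (alphaK n k (σ i) : ℝ) := by
  constructor
  · intro hv
    obtain ⟨β, hβ, rfl⟩ := extremePoints_convexHull_subset hv
    set σ := Tuple.sort β
    obtain ⟨k, hk, hsorted⟩ := exists_eq_alphaK_of_monotone hn (Tuple.monotone_sort β)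
      (eq_one_or_eq_succ_of_mem_extremePoints (hβ.comp_perm σ) (Tuple.monotone_sort β)
        (comp_perm_mem_extremePoints hv σ))
    refine ⟨k, hk, σ⁻¹, funext fun i => ?_⟩
    simp [σ, ← hsorted]
  · rintro ⟨k, -, σ, rfl⟩
    exact comp_perm_mem_extremePoints (alphaK_mem_extremePoints k) σ
end
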